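/- arXiv:1412.8459 — 3 statements merged into one kernel-verified Lean document; each statement's English description precedes it below -/
import Mathlib

section
/- Let i ∈ ℤ≥0, j ≥ 1, and suppose given for each p = 1,...,j an active morphism f_p : [1] → [n_p] and a cellular morphism c_p : [n_p] → [i] in Δ. If the composites satisfy c_p(n_p) = c_{p+1}(0) for 1 ≤ p < j, then, setting n = n₁ + ... + n_j, the maps c_p glue to a unique cellular morphism c : [n] → [i] with c ∘ η_p = c_p for each p, where η_p : [n_p] → [n] is the inert map η_p(q) = n₁ + ... + n_{p-1} + q; moreover the map f : [j] → [n] defined by f(p) = n₁ + ... + n_p (and f(0) = 0) is active and satisfies c(f(p)) = c_p(n_p) for all p. -/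
/-- A morphism `[n] → [m]` of the simplex category is *active* if it preserves
the extremal elements. -/
def Active {n m : ℕ} (f : Fin (n + 1) → Fin (m + 1)) : Prop :=
  f 0 = 0 ∧ f (Fin.last n) = Fin.last m

/-- A morphism `[m] → [n]` of the simplex category is *cellular* if
`f(i+1) ≤ f(i) + 1` for all `i`. -/
def Cellular {m n : ℕ} (f : Fin (m + 1) → Fin (n + 1)) : Prop :=
  ∀ i : Fin m, (f i.succ : ℕ) ≤ (f i.castSucc : ℕ) + 1

/-!
Place the blocks `[n_1], …, [n_j]` end to end in `[n]`, overlapping at their endpoints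
(the images of the inert maps `η_p`). Every point of `[n]` lies in some block, and a point
lying in two blocks `p < p'` is the last point of `p` and the first point of `p'`, all blocks
in between being degenerate (`n_r = 0`); the gluing conditions `c_r(n_r) = c_{r+1}(0)` then
chain together to show that the `c_p` agree on overlaps. So `c` is well defined and unique.
Any edge `t → t + 1` of `[n]` lies inside a single block, so monotonicity and cellularity of
`c` are inherited from those of the `c_p`.
-/

open Finset

section BlockStart

variable {j : ℕ} (n : Fin j → ℕ)

/-- Blocks are indexed from `0`: block `p` is the interval
`[blockStart n p, blockStart n (p + 1)]` of `[∑ r, n r]`. -/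
def blockStart (p : ℕ) : ℕ := ∑ r ∈ univ.filter (fun r : Fin j => (r : ℕ) < p), n r

theorem blockStart_zero : blockStart n 0 = 0 := by simp [blockStart]

theorem blockStart_succ (p : Fin j) : blockStart n (p + 1) = blockStart n p + n p := by
  have h : univ.filter (fun r : Fin j => (r : ℕ) < p + 1)
      = insert p (univ.filter (fun r : Fin j => (r : ℕ) < p)) := by
    ext r
    simp only [mem_filter, mem_univ, true_and, mem_insert, Fin.ext_iff]
    omega
  rw [blockStart, h, sum_insert (by simp), blockStart, add_comm]

theorem blockStart_of_le {p : ℕ} (hp : j ≤ p) : blockStart n p = ∑ r, n r := by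
  rw [blockStart, filter_true_of_mem fun r _ => by omega]

theorem blockStart_mono : Monotone (blockStart n) := fun _ _ hab =>
  sum_le_sum_of_subset fun r => by simp only [mem_filter, mem_univ, true_and]; omega

theorem blockStart_le_sum (p : ℕ) : blockStart n p ≤ ∑ r, n r := by
  rw [← blockStart_of_le n (le_max_right p j)]
  exact blockStart_mono n (le_max_left p j)

theorem exists_eq_blockStart_add_of_lt {t : ℕ} (ht : t < ∑ r, n r) :
    ∃ (p : Fin j) (q : Fin (n p)), t = blockStart n p + q := by
  suffices h : ∀ k, t < blockStart n k →
      ∃ (p : Fin j) (q : Fin (n p)), t = blockStart n p + q by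
    exact h j (by rwa [blockStart_of_le n le_rfl])
  intro k
  induction k with
  | zero => simp [blockStart_zero]
  | succ k ih =>
    intro hk
    by_cases hkj : k < j
    · rw [blockStart_succ n ⟨k, hkj⟩] at hk
      by_cases htk : t < blockStart n k
      · exact ih htk
      · exact ⟨⟨k, hkj⟩, ⟨t - blockStart n k, by simp only at hk; omega⟩,
          by simp only; omega⟩
    · rw [blockStart_of_le n (by omega : j ≤ k + 1),
        ← blockStart_of_le n (by omega : j ≤ k)] at hk
      exact ih hk

theorem exists_eq_blockStart_add (hj : 0 < j) {x : ℕ} (hx : x ≤ ∑ r, n r) :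
    ∃ (p : Fin j) (q : Fin (n p + 1)), x = blockStart n p + q := by
  rcases hx.lt_or_eq with hx | rfl
  · obtain ⟨p, q, rfl⟩ := exists_eq_blockStart_add_of_lt n hx
    exact ⟨p, q.castSucc, rfl⟩
  · refine ⟨⟨j - 1, by omega⟩, Fin.last _, ?_⟩
    rw [Fin.val_last, ← blockStart_succ, blockStart_of_le n (by simp only; omega)]

end BlockStart

section Gluing

variable {i j : ℕ} {n : Fin j → ℕ} (c : ∀ p : Fin j, Fin (n p + 1) → Fin (i + 1))

theorem apply_last_eq_apply_zero_of_blockStart_eq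
    (hglue : ∀ p q : Fin j, (q : ℕ) = (p : ℕ) + 1 → c p (Fin.last (n p)) = c q 0)
    {p p' : Fin j} (hlt : p < p') (h : blockStart n (p + 1) = blockStart n p') :
    c p (Fin.last _) = c p' 0 := by
  obtain ⟨k, hk⟩ := p'
  induction k with
  | zero => exact absurd hlt (Nat.not_lt_zero _)
  | succ k ih =>
    have hk' : k < j := by omega
    have hpk : (p : ℕ) ≤ k := Nat.lt_succ_iff.mp hlt
    rcases hpk.lt_or_eq with hpk | hpk
    · have hstep := blockStart_succ n ⟨k, hk'⟩
      have hmono := blockStart_mono n (show (p : ℕ) + 1 ≤ k from hpk)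
      have hnk : n ⟨k, hk'⟩ = 0 := by simp only at h hstep; omega
      calc c p (Fin.last _) = c ⟨k, hk'⟩ 0 := ih hk' hpk (by simp only at h hstep ⊢; omega)
        _ = c ⟨k, hk'⟩ (Fin.last _) := congrArg _ (Fin.ext (by simp [hnk]))
        _ = c ⟨k + 1, hk⟩ 0 := hglue _ _ rfl
    · exact hglue _ _ (by simp only [hpk])

theorem apply_eq_of_blockStart_add_eq
    (hglue : ∀ p q : Fin j, (q : ℕ) = (p : ℕ) + 1 → c p (Fin.last (n p)) = c q 0)
    {p p' : Fin j} {q : Fin (n p + 1)} {q' : Fin (n p' + 1)}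
    (h : blockStart n p + q = blockStart n p' + q') : c p q = c p' q' := by
  wlog hpp' : p ≤ p' generalizing p p'
  · exact (this h.symm (le_of_not_ge hpp')).symm
  rcases hpp'.lt_or_eq with hlt | rfl
  · have hstep := blockStart_succ n p
    have hmono := blockStart_mono n (show (p : ℕ) + 1 ≤ p' from hlt)
    have hq := q.is_le
    obtain rfl : q = Fin.last _ := Fin.ext (by simp only [Fin.val_last]; omega)
    obtain rfl : q' = 0 := Fin.ext (by simp only [Fin.val_last, Fin.val_zero] at h ⊢; omega)
    exact apply_last_eq_apply_zero_of_blockStart_eq c hglue hlt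
      (by simp only [Fin.val_last] at h; omega)
  · exact congrArg (c p) (Fin.ext (by omega))

/-- `C ∘ η_p = c_p` for every block `p`. -/
def IsGluing (C : Fin ((∑ r, n r) + 1) → Fin (i + 1)) : Prop :=
  ∀ (p : Fin j) (q : Fin (n p + 1)) (x : Fin ((∑ r, n r) + 1)),
    (x : ℕ) = blockStart n p + q → C x = c p q

theorem existsUnique_isGluing (hj : 0 < j)
    (hglue : ∀ p q : Fin j, (q : ℕ) = (p : ℕ) + 1 → c p (Fin.last (n p)) = c q 0) :
    ∃! C, IsGluing c C := by
  have hrep (x : Fin ((∑ r, n r) + 1)) :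
      ∃ (p : Fin j) (q : Fin (n p + 1)), (x : ℕ) = blockStart n p + q :=
    exists_eq_blockStart_add n hj (Nat.lt_succ_iff.mp x.isLt)
  choose P Q hPQ using hrep
  exact ⟨fun x => c (P x) (Q x),
    fun p q x hx => apply_eq_of_blockStart_add_eq c hglue ((hPQ x).symm.trans hx),
    fun C hC => funext fun x => hC _ _ x (hPQ x)⟩

variable {c} {C : Fin ((∑ r, n r) + 1) → Fin (i + 1)}

theorem IsGluing.exists_edge (hC : IsGluing c C) (t : Fin (∑ r, n r)) :
    ∃ (p : Fin j) (q : Fin (n p)), C t.castSucc = c p q.castSucc ∧ C t.succ = c p q.succ := by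
  obtain ⟨p, q, ht⟩ := exists_eq_blockStart_add_of_lt n t.isLt
  exact ⟨p, q, hC _ _ _ (by simp [ht]), hC _ _ _ (by simp [ht]; omega)⟩

theorem IsGluing.monotone (hcm : ∀ p, Monotone (c p)) (hC : IsGluing c C) : Monotone C :=
  Fin.monotone_iff_le_succ.2 fun t => by
    obtain ⟨p, q, hcast, hsucc⟩ := hC.exists_edge t
    rw [hcast, hsucc]
    exact hcm p (Fin.castSucc_le_succ q)

theorem IsGluing.cellular (hcc : ∀ p, Cellular (c p)) (hC : IsGluing c C) : Cellular C :=
  fun t => by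
    obtain ⟨p, q, hcast, hsucc⟩ := hC.exists_edge t
    rw [hcast, hsucc]
    exact hcc p q

end Gluing

theorem stmt5_general (i j : ℕ) (hj : 1 ≤ j) (n : Fin j → ℕ)
    (c : ∀ p : Fin j, Fin (n p + 1) → Fin (i + 1))
    (hcm : ∀ p, Monotone (c p)) (hcc : ∀ p, Cellular (c p))
    (hglue : ∀ p q : Fin j, (q : ℕ) = (p : ℕ) + 1 → c p (Fin.last (n p)) = c q 0) :
    ∃! C : Fin ((∑ r, n r) + 1) → Fin (i + 1),
      (Monotone C ∧ Cellular C ∧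
        ∀ (p : Fin j) (q : Fin (n p + 1)) (x : Fin ((∑ r, n r) + 1)),
          (x : ℕ) = (∑ r ∈ Finset.univ.filter (fun r : Fin j => (r : ℕ) < (p : ℕ)), n r) + (q : ℕ) →
          C x = c p q) ∧
      ∃ F : Fin (j + 1) → Fin ((∑ r, n r) + 1),
        Monotone F ∧ Active F ∧
        (∀ p : Fin (j + 1),
          (F p : ℕ) = ∑ r ∈ Finset.univ.filter (fun r : Fin j => (r : ℕ) < (p : ℕ)), n r) ∧
        ∀ p : Fin j, C (F p.succ) = c p (Fin.last (n p)) := by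
  obtain ⟨C, hC, huniq⟩ := existsUnique_isGluing c hj hglue
  refine ⟨C, ⟨⟨hC.monotone hcm, hC.cellular hcc, hC⟩, ?_⟩, fun C' hC' => huniq C' hC'.1.2.2⟩
  refine ⟨fun p => ⟨blockStart n p, Nat.lt_succ_of_le (blockStart_le_sum n p)⟩,
    fun a b hab => blockStart_mono n hab,
    ⟨Fin.ext (blockStart_zero n), Fin.ext (blockStart_of_le n le_rfl)⟩,
    fun p => rfl, fun p => hC p _ _ (blockStart_succ n p)⟩

/-- Gluing of cellular morphisms: given active morphisms `f_p : [1] → [n_p]`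
and cellular morphisms `c_p : [n_p] → [i]` with matching endpoints
`c_p(n_p) = c_{p+1}(0)`, the `c_p` glue to a unique cellular morphism
`c : [n₁+⋯+n_j] → [i]` with `c ∘ η_p = c_p`, where `η_p` is the inert map
`q ↦ n₁+⋯+n_{p-1}+q`; moreover the map `f : [j] → [n]` with
`f(p) = n₁+⋯+n_p` is active and satisfies `c(f(p)) = c_p(n_p)`. -/
theorem stmt5 (i j : ℕ) (hj : 1 ≤ j) (n : Fin j → ℕ)
    (f : ∀ p : Fin j, Fin (1 + 1) → Fin (n p + 1))
    (hfm : ∀ p, Monotone (f p)) (hfa : ∀ p, Active (f p))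
    (c : ∀ p : Fin j, Fin (n p + 1) → Fin (i + 1))
    (hcm : ∀ p, Monotone (c p)) (hcc : ∀ p, Cellular (c p))
    (hglue : ∀ p q : Fin j, (q : ℕ) = (p : ℕ) + 1 → c p (Fin.last (n p)) = c q 0) :
    ∃! C : Fin ((∑ r, n r) + 1) → Fin (i + 1),
      (Monotone C ∧ Cellular C ∧
        ∀ (p : Fin j) (q : Fin (n p + 1)) (x : Fin ((∑ r, n r) + 1)),
          (x : ℕ) = (∑ r ∈ Finset.univ.filter (fun r : Fin j => (r : ℕ) < (p : ℕ)), n r) + (q : ℕ) →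
          C x = c p q) ∧
      ∃ F : Fin (j + 1) → Fin ((∑ r, n r) + 1),
        Monotone F ∧ Active F ∧
        (∀ p : Fin (j + 1),
          (F p : ℕ) = ∑ r ∈ Finset.univ.filter (fun r : Fin j => (r : ℕ) < (p : ℕ)), n r) ∧
        ∀ p : Fin j, C (F p.succ) = c p (Fin.last (n p)) :=
  stmt5_general i j hj n c hcm hcc hglue
end

section
/- Let p : E → C be a functor between categories and let F : C → E be a left adjoint to p with counit c : F ∘ p → id_E. A morphism φ : e → e' in E is p-cocartesian if and only if the commutative square with top edge Fp(φ) : Fp(e) → Fp(e'), bottom edge φ : e → e', and vertical edges the counit components c_e and c_{e'}, is a pushout square in E. -/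
open CategoryTheory

/-- A morphism `φ : e ⟶ e'` of `E` is `p`-cocartesian (for `p : E ⥤ C`) if for
every `x : E`, every `ψ : e ⟶ x` and every `γ : p(e') ⟶ p(x)` with
`p(ψ) = γ ∘ p(φ)` there is a unique `χ : e' ⟶ x` over `γ` with `χ ∘ φ = ψ`. -/
def IsCocart {E C : Type*} [Category E] [Category C] (p : E ⥤ C)
    {e e' : E} (φ : e ⟶ e') : Prop :=
  ∀ (x : E) (ψ : e ⟶ x) (γ : p.obj e' ⟶ p.obj x), p.map ψ = p.map φ ≫ γ →
    ∃! χ : e' ⟶ x, φ ≫ χ = ψ ∧ p.map χ = γ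

section Aux

variable {E C : Type*} [Category E] [Category C] {p : E ⥤ C} {F : C ⥤ E}

/-- `counit ≫ χ` corresponds to `p.map χ` under the adjunction bijection. -/
lemma homEquiv_counit_comp (adj : F ⊣ p) {a x : E} (χ : a ⟶ x) :
    adj.homEquiv (p.obj a) x
      ((adj.counit.app a : F.obj (p.obj a) ⟶ a) ≫ χ) = p.map χ := by
  rw [Adjunction.homEquiv_unit, p.map_comp, ← Category.assoc,
    adj.right_triangle_components, Category.id_comp]

lemma counit_comp_eq (adj : F ⊣ p) {a x : E} (χ : a ⟶ x) :
    (adj.counit.app a : F.obj (p.obj a) ⟶ a) ≫ χ =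
      (adj.homEquiv (p.obj a) x).symm (p.map χ) := by
  rw [← homEquiv_counit_comp adj χ, Equiv.symm_apply_apply]

end Aux

/-- Let `p : E ⥤ C` have a left adjoint `F`. A morphism `φ : e ⟶ e'` is
`p`-cocartesian if and only if the naturality square of the counit at `φ`
(with top edge `F(p(φ))`, vertical edges the counit components, bottom edge
`φ`) is a pushout square in `E`. -/
theorem stmt11 {E C : Type*} [Category E] [Category C] (p : E ⥤ C) (F : C ⥤ E)
    (adj : F ⊣ p) {e e' : E} (φ : e ⟶ e') :
    IsCocart p φ ↔
      IsPushout (F.map (p.map φ)) (adj.counit.app e) (adj.counit.app e') φ := by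
  have comm : F.map (p.map φ) ≫ adj.counit.app e' = adj.counit.app e ≫ φ :=
    adj.counit.naturality φ
  constructor
  · intro hc
    refine IsPushout.of_isColimit (c := Limits.PushoutCocone.mk _ _ comm) ?_
    have key : ∀ s : Limits.PushoutCocone (F.map (p.map φ)) (adj.counit.app e),
        ∃! χ : e' ⟶ s.pt, φ ≫ χ = s.inr ∧ p.map χ = adj.homEquiv _ _ s.inl := by
      intro s
      refine hc _ s.inr (adj.homEquiv _ _ s.inl) ?_
      have h := congrArg (adj.homEquiv _ _) s.condition
      rw [adj.homEquiv_naturality_left] at h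
      exact (homEquiv_counit_comp adj s.inr).symm.trans h.symm
    refine Limits.PushoutCocone.IsColimit.mk comm
      (fun s => (key s).exists.choose) (fun s => ?_) (fun s => ?_) (fun s m h1 h2 => ?_)
    · have := ((key s).exists.choose_spec).2
      calc adj.counit.app e' ≫ (key s).exists.choose
          = (adj.homEquiv _ _).symm (p.map (key s).exists.choose) :=
            counit_comp_eq adj _
        _ = s.inl := by rw [this, Equiv.symm_apply_apply]
    · exact ((key s).exists.choose_spec).1
    · refine (key s).unique ⟨h2, ?_⟩ ((key s).exists.choose_spec)
      rw [← h1]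
      exact (homEquiv_counit_comp adj (m : e' ⟶ s.pt)).symm
  · intro hp x ψ γ hψ
    obtain ⟨a, ha⟩ : ∃ a, adj.homEquiv _ _ a = γ := ⟨_, Equiv.apply_symm_apply _ _⟩
    have w : F.map (p.map φ) ≫ a = adj.counit.app e ≫ ψ := by
      apply (adj.homEquiv _ _).injective
      rw [adj.homEquiv_naturality_left, homEquiv_counit_comp adj ψ, ha]
      exact hψ.symm
    have key : ∀ χ : e' ⟶ x, p.map χ = γ → adj.counit.app e' ≫ χ = a := by
      intro χ hχ
      apply (adj.homEquiv _ _).injective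
      rw [homEquiv_counit_comp adj χ, hχ, ha]
    refine ⟨hp.desc a ψ w, ⟨hp.inr_desc a ψ w, ?_⟩, ?_⟩
    · exact (homEquiv_counit_comp adj (hp.desc a ψ w)).symm.trans
        ((congrArg (adj.homEquiv _ _) (hp.inl_desc a ψ w)).trans ha)
    · intro χ' ⟨h1, h2⟩
      apply hp.hom_ext
      · rw [hp.inl_desc]; exact key χ' h2
      · rw [hp.inr_desc, h1]
end

section
/- Let C₀ ⊆ C₁, C₂ ⊆ C be full subcategories with C₀ = C₁ ∩ C₂ such that every object of C lies in C₁ or in C₂, and let φ : C → X be a functor to a category X. Then φ is a (pointwise) right Kan extension of its restriction φ|_{C₀} along the inclusion C₀ ↪ C if and only if φ|_{C₁} is a right Kan extension of φ|_{C₀} along C₀ ↪ C₁ and φ|_{C₂} is a right Kan extension of φ|_{C₀} along C₀ ↪ C₂. -/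
/-! Since `C₁` is full, for `c ∈ C₁` the comma category `c ↓ C₀` formed in `C` is isomorphic to
the one formed in `C₁`, compatibly with the diagrams to `X`; so the pointwise limit condition at `c`
reads the same in both settings. As every object lies in `C₁` or `C₂`, the conditions over `C`
are exactly those over `C₁` together with those over `C₂`. -/

open CategoryTheory

/-- `φ : C ⥤ X` is a pointwise right Kan extension of its restriction to the
full subcategory of objects satisfying `Q`, along the inclusion: for every
`c : C`, the object `φ(c)` with the canonical cone is a limit of the diagram
`(c ↓ Q) → X`. (Expressed via the universal property of the limit.) -/
def IsPtwiseRKE {C X : Type*} [Category C] [Category X] (Q : C → Prop)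
    (φ : C ⥤ X) : Prop :=
  ∀ (c : C) (x : X)
    (legs : ∀ d : StructuredArrow c (ObjectProperty.ι Q),
      x ⟶ φ.obj ((ObjectProperty.ι Q).obj d.right)),
    (∀ (d d' : StructuredArrow c (ObjectProperty.ι Q)) (g : d ⟶ d'),
      legs d ≫ φ.map ((ObjectProperty.ι Q).map g.right) = legs d') →
    ∃! u : x ⟶ φ.obj c, ∀ d, u ≫ φ.map d.hom = legs d

section

variable {C X : Type*} [Category C] [Category X]

def IsPtwiseRKEAt (Q : C → Prop) (φ : C ⥤ X) (c : C) : Prop :=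
  ∀ (x : X)
    (legs : ∀ d : StructuredArrow c (ObjectProperty.ι Q),
      x ⟶ φ.obj ((ObjectProperty.ι Q).obj d.right)),
    (∀ (d d' : StructuredArrow c (ObjectProperty.ι Q)) (g : d ⟶ d'),
      legs d ≫ φ.map ((ObjectProperty.ι Q).map g.right) = legs d') →
    ∃! u : x ⟶ φ.obj c, ∀ d, u ≫ φ.map d.hom = legs d

theorem isPtwiseRKE_iff_forall_isPtwiseRKEAt (Q : C → Prop) (φ : C ⥤ X) :
    IsPtwiseRKE Q φ ↔ ∀ c, IsPtwiseRKEAt Q φ c :=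
  Iff.rfl

namespace CategoryTheory.StructuredArrow

variable (P Q : C → Prop) {c : C} (hc : P c)

def toFullSubcategoryInter :
    StructuredArrow c (ObjectProperty.ι (fun c => P c ∧ Q c)) ⥤
      StructuredArrow (⟨c, hc⟩ : ObjectProperty.FullSubcategory P)
        (ObjectProperty.ι (fun d : ObjectProperty.FullSubcategory P => Q d.obj)) where
  obj d := ⟨⟨⟨⟩⟩, ⟨⟨d.right.obj, d.right.property.1⟩, d.right.property.2⟩,
    ObjectProperty.homMk d.hom⟩
  map g := homMk (ObjectProperty.homMk (ObjectProperty.homMk g.right.hom))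
    (ObjectProperty.hom_ext _ (w g))

def ofFullSubcategoryInter :
    StructuredArrow (⟨c, hc⟩ : ObjectProperty.FullSubcategory P)
        (ObjectProperty.ι (fun d : ObjectProperty.FullSubcategory P => Q d.obj)) ⥤
      StructuredArrow c (ObjectProperty.ι (fun c => P c ∧ Q c)) where
  obj d := ⟨⟨⟨⟩⟩, ⟨d.right.obj.obj, d.right.obj.property, d.right.property⟩, d.hom.hom⟩
  map g := homMk (ObjectProperty.homMk g.right.hom.hom) (congrArg (·.hom) (w g))

end CategoryTheory.StructuredArrow

open StructuredArrow in
theorem isPtwiseRKEAt_and_iff (P Q : C → Prop) {φ : C ⥤ X} {c : C} (hc : P c) :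
    IsPtwiseRKEAt (fun c => P c ∧ Q c) φ c ↔
      IsPtwiseRKEAt (fun d : ObjectProperty.FullSubcategory P => Q d.obj)
        (ObjectProperty.ι P ⋙ φ) ⟨c, hc⟩ := by
  let F := toFullSubcategoryInter P Q hc
  let G := ofFullSubcategoryInter P Q hc
  -- `F` and `G` are mutually inverse on objects up to structure eta, so e.g. `hu (G.obj d)`
  -- is literally a statement about `legs d`.
  constructor
  · intro H x legs hlegs
    obtain ⟨u, hu, huniq⟩ := H x (fun d => legs (F.obj d)) fun d d' g => hlegs _ _ (F.map g)
    exact ⟨u, fun d => hu (G.obj d), fun u' hu' => huniq u' fun d => hu' (F.obj d)⟩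
  · intro H x legs hlegs
    obtain ⟨u, hu, huniq⟩ := H x (fun d => legs (G.obj d)) fun d d' g => hlegs _ _ (G.map g)
    exact ⟨u, fun d => hu (F.obj d), fun u' hu' => huniq u' fun d => hu' (G.obj d)⟩

end

/-- Let `C₀ = C₁ ∩ C₂` be full subcategories of `C` such that every object of
`C` lies in `C₁` or `C₂`.  A functor `φ : C ⥤ X` is a pointwise right Kan
extension of `φ|_{C₀}` along `C₀ ↪ C` if and only if `φ|_{C₁}` is a pointwise
right Kan extension of `φ|_{C₀}` along `C₀ ↪ C₁` and `φ|_{C₂}` is a pointwise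
right Kan extension of `φ|_{C₀}` along `C₀ ↪ C₂`. -/
theorem stmt13 {C X : Type*} [Category C] [Category X] (P₁ P₂ : C → Prop)
    (φ : C ⥤ X) (hcover : ∀ c, P₁ c ∨ P₂ c) :
    IsPtwiseRKE (fun c => P₁ c ∧ P₂ c) φ ↔
      (IsPtwiseRKE (fun d : ObjectProperty.FullSubcategory P₁ => P₂ d.obj)
          (ObjectProperty.ι P₁ ⋙ φ) ∧
        IsPtwiseRKE (fun d : ObjectProperty.FullSubcategory P₂ => P₁ d.obj)
          (ObjectProperty.ι P₂ ⋙ φ)) := by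
  simp only [isPtwiseRKE_iff_forall_isPtwiseRKEAt]
  have h₁ (c : C) (hc : P₁ c) := isPtwiseRKEAt_and_iff P₁ P₂ (φ := φ) hc
  have h₂ (c : C) (hc : P₂ c) := by
    simpa only [and_comm] using isPtwiseRKEAt_and_iff P₂ P₁ (φ := φ) hc
  refine ⟨fun H => ⟨fun c => (h₁ c.obj c.property).mp (H c.obj),
    fun c => (h₂ c.obj c.property).mp (H c.obj)⟩, fun ⟨H₁, H₂⟩ c => ?_⟩
  rcases hcover c with hc | hc
  · exact (h₁ c hc).mpr (H₁ ⟨c, hc⟩)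
  · exact (h₂ c hc).mpr (H₂ ⟨c, hc⟩)
end
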